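/- Let F : ℝ → ℝ be a Schwartz class function, let n be an odd positive integer, and let Z > 0 be a real number. Then Σ_{d ∈ ℤ, d odd} (d/n)·F(d/Z) = (Z/(2n))·(2/n)·Σ_{k ∈ ℤ} (−1)^k·G_k(n)·F̌(kZ/(2n)), where (d/n) and (2/n) are Jacobi symbols, G_k(n) = ((1−i)/2 + (−1/n)·(1+i)/2) · Σ_{a mod n} (a/n)·e(ak/n), and F̌(y) = ∫_{−∞}^{∞} (cos(2πxy) + sin(2πxy))·F(x) dx. -/

import Mathlib

open Finset

/-- The Gauss-type sum
`G_k(n) = ((1-i)/2 + (−1/n)(1+i)/2) · Σ_{a mod n} (a/n) e(ak/n)`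
from Soundararajan's work, where `(·/n)` is the Jacobi symbol and `e(x) = e^{2πix}`. -/
noncomputable def Gk (k : ℤ) (n : ℕ) : ℂ :=
  ((1 - Complex.I) / 2 + (jacobiSym (-1) n : ℂ) * (1 + Complex.I) / 2) *
    ∑ a ∈ Finset.range n,
      (jacobiSym (a : ℤ) n : ℂ) * Complex.exp (2 * Real.pi * Complex.I * a * k / n)

/-- The Fourier-type transform `F̌(y) = ∫ (cos(2πxy) + sin(2πxy)) F(x) dx` of a
Schwartz function `F : ℝ → ℝ`. -/
noncomputable def fourierCheck (F : SchwartzMap ℝ ℝ) (y : ℝ) : ℝ :=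
  ∫ x : ℝ, (Real.cos (2 * Real.pi * x * y) + Real.sin (2 * Real.pi * x * y)) * F x

open MeasureTheory Real Complex SchwartzMap
open scoped FourierTransform

noncomputable section PoissonAux

/-- The cosine part of the transform. -/
def Ci (F : SchwartzMap ℝ ℝ) (y : ℝ) : ℝ := ∫ x : ℝ, Real.cos (2 * Real.pi * x * y) * F x

/-- The sine part of the transform. -/
def Si (F : SchwartzMap ℝ ℝ) (y : ℝ) : ℝ := ∫ x : ℝ, Real.sin (2 * Real.pi * x * y) * F x

lemma integrable_cos_mul (F : SchwartzMap ℝ ℝ) (y : ℝ) :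
    Integrable (fun x : ℝ => Real.cos (2 * Real.pi * x * y) * F x) := by
  refine F.integrable.bdd_mul (c := 1) ?_ (ae_of_all _ fun x => ?_)
  · exact (Real.continuous_cos.comp (by continuity)).aestronglyMeasurable
  · rw [Real.norm_eq_abs]; exact Real.abs_cos_le_one _

lemma integrable_sin_mul (F : SchwartzMap ℝ ℝ) (y : ℝ) :
    Integrable (fun x : ℝ => Real.sin (2 * Real.pi * x * y) * F x) := by
  refine F.integrable.bdd_mul (c := 1) ?_ (ae_of_all _ fun x => ?_)
  · exact (Real.continuous_sin.comp (by continuity)).aestronglyMeasurable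
  · rw [Real.norm_eq_abs]; exact Real.abs_sin_le_one _

lemma Ci_neg (F : SchwartzMap ℝ ℝ) (y : ℝ) : Ci F (-y) = Ci F y := by
  unfold Ci
  congr 1
  funext x
  rw [mul_neg, Real.cos_neg]

lemma Si_neg (F : SchwartzMap ℝ ℝ) (y : ℝ) : Si F (-y) = - Si F y := by
  unfold Si
  rw [← integral_neg]
  congr 1
  funext x
  rw [mul_neg, Real.sin_neg, neg_mul]

lemma fourierCheck_eq (F : SchwartzMap ℝ ℝ) (y : ℝ) :
    fourierCheck F y = Ci F y + Si F y := by
  unfold fourierCheck Ci Si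
  rw [← integral_add (integrable_cos_mul F y) (integrable_sin_mul F y)]
  congr 1
  funext x
  ring




/-- Complex-valued version of a real Schwartz function. -/
def FcS (F : SchwartzMap ℝ ℝ) : SchwartzMap ℝ ℂ :=
  SchwartzMap.bilinLeftCLM
    (ContinuousLinearMap.lsmul ℝ ℝ : ℝ →L[ℝ] ℂ →L[ℝ] ℂ)
    (Function.HasTemperateGrowth.const (1 : ℂ)) F

@[simp] lemma FcS_apply (F : SchwartzMap ℝ ℝ) (x : ℝ) : FcS F x = (F x : ℂ) := by
  show (F x) • (1 : ℂ) = _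
  rw [Complex.real_smul, mul_one]

/-- Dilation of a Schwartz function. -/
def dilS (c : ℝ) (hc : c ≠ 0) (G : SchwartzMap ℝ ℂ) : SchwartzMap ℝ ℂ :=
  SchwartzMap.compCLMOfContinuousLinearEquiv ℝ
    (ContinuousLinearEquiv.unitsEquivAut ℝ (Units.mk0 c hc)) G

@[simp] lemma dilS_apply (c : ℝ) (hc : c ≠ 0) (G : SchwartzMap ℝ ℂ) (x : ℝ) :
    dilS c hc G x = G (x * c) := rfl

lemma translS_htg (x : ℝ) : Function.HasTemperateGrowth (fun t : ℝ => x + t) := by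
  apply Function.HasTemperateGrowth.of_fderiv (k := 1) (C := ‖x‖ + 1)
  · have : fderiv ℝ (fun t : ℝ => x + t) = fun _ => ContinuousLinearMap.id ℝ ℝ := by
      funext t
      rw [fderiv_const_add]
      exact fderiv_id'
    rw [this]
    exact Function.HasTemperateGrowth.const _
  · exact differentiable_id.const_add x
  · intro t
    have := norm_add_le x t
    have h1 : (0:ℝ) ≤ ‖t‖ := norm_nonneg t
    nlinarith [norm_nonneg x]

/-- Translation of a Schwartz function. -/
def translS (x : ℝ) (G : SchwartzMap ℝ ℂ) : SchwartzMap ℝ ℂ :=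
  SchwartzMap.compCLMOfAntilipschitz ℝ (translS_htg x)
    ((Isometry.of_dist_eq (fun a b => by rw [dist_eq_norm, dist_eq_norm]; ring_nf)).antilipschitz) G

@[simp] lemma translS_apply (x : ℝ) (G : SchwartzMap ℝ ℂ) (t : ℝ) :
    translS x G t = G (x + t) := by
  simp [translS]

/-- Norm-summability of a Schwartz function over the integers. -/
lemma schwartz_summable_norm (G : SchwartzMap ℝ ℂ) : Summable (fun m : ℤ => ‖G m‖) := by
  apply summable_of_isBigO (Real.summable_abs_int_rpow one_lt_two)
  exact ((G.isBigO_cocompact_rpow (-2)).norm_left).comp_tendsto Int.tendsto_coe_cofinite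

lemma schwartz_summable (G : SchwartzMap ℝ ℂ) : Summable (fun m : ℤ => G m) :=
  (schwartz_summable_norm G).of_norm

end PoissonAux

section Fourier

lemma fourierIntegral_FcS (F : SchwartzMap ℝ ℝ) (y : ℝ) :
    𝓕 (⇑(FcS F)) y = (Ci F y : ℂ) - (Si F y : ℂ) * Complex.I := by
  rw [Real.fourier_real_eq_integral_exp_smul]
  have h1 : ∀ x : ℝ,
      Complex.exp ((-2 * Real.pi * x * y : ℝ) * Complex.I) • (FcS F x)
        = ((Real.cos (2 * Real.pi * x * y) * F x : ℝ) : ℂ)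
          + ((Real.sin (2 * Real.pi * x * y) * F x : ℝ) : ℂ) * (-Complex.I) := by
    intro x
    rw [FcS_apply, Complex.exp_mul_I, smul_eq_mul]
    rw [← Complex.ofReal_cos, ← Complex.ofReal_sin]
    have hc : Real.cos (-2 * Real.pi * x * y) = Real.cos (2 * Real.pi * x * y) := by
      rw [show (-2 : ℝ) * Real.pi * x * y = -(2 * Real.pi * x * y) by ring, Real.cos_neg]
    have hs : Real.sin (-2 * Real.pi * x * y) = -Real.sin (2 * Real.pi * x * y) := by
      rw [show (-2 : ℝ) * Real.pi * x * y = -(2 * Real.pi * x * y) by ring, Real.sin_neg]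
    rw [hc, hs]
    push_cast
    ring
  simp only [h1]
  have hI1 : Integrable (fun x : ℝ => ((Real.cos (2 * Real.pi * x * y) * F x : ℝ) : ℂ)) :=
    (integrable_cos_mul F y).ofReal
  have hI2 : Integrable (fun x : ℝ =>
      ((Real.sin (2 * Real.pi * x * y) * F x : ℝ) : ℂ) * (-Complex.I)) :=
    ((integrable_sin_mul F y).ofReal).mul_const (-Complex.I)
  rw [integral_add hI1 hI2, integral_mul_const]
  have e1 : (∫ a : ℝ, ((Real.cos (2 * Real.pi * a * y) * F a : ℝ) : ℂ)) = ((Ci F y : ℝ) : ℂ) :=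
    integral_ofReal
  have e2 : (∫ a : ℝ, ((Real.sin (2 * Real.pi * a * y) * F a : ℝ) : ℂ)) = ((Si F y : ℝ) : ℂ) :=
    integral_ofReal
  rw [e1, e2]
  ring

end Fourier

lemma fourier_dilS (G0 : SchwartzMap ℝ ℂ) (c : ℝ) (hc : 0 < c) (y : ℝ) :
    𝓕 (⇑(dilS c hc.ne' G0)) y = (c⁻¹ : ℝ) * 𝓕 (⇑G0) (y / c) := by
  rw [Real.fourier_real_eq_integral_exp_smul,
      Real.fourier_real_eq_integral_exp_smul]
  have h1 : (fun v : ℝ => Complex.exp ((-2 * Real.pi * v * y : ℝ) * Complex.I)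
        • (dilS c hc.ne' G0 v))
      = fun v : ℝ => (fun u : ℝ =>
          Complex.exp ((-2 * Real.pi * u * (y / c) : ℝ) * Complex.I) • G0 u) (v * c) := by
    funext v
    have e0 : (-2 * Real.pi * (v * c) * (y / c) : ℝ) = -2 * Real.pi * v * y := by
      field_simp
    show _ = Complex.exp ((-2 * Real.pi * (v * c) * (y / c) : ℝ) * Complex.I) • G0 (v * c)
    rw [dilS_apply, e0]
  rw [h1, MeasureTheory.Measure.integral_comp_mul_right
    (fun u : ℝ => Complex.exp ((-2 * Real.pi * u * (y / c) : ℝ) * Complex.I) • G0 u) c]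
  rw [abs_of_pos (inv_pos.2 hc), Complex.real_smul]

lemma poisson_b (F : SchwartzMap ℝ ℝ) {n : ℕ} (hn0 : 0 < n) {Z : ℝ} (hZ : 0 < Z) (b : ℕ) :
    ∑' m : ℤ, ((F (((n : ℝ) + 2 * b + 2 * n * m) / Z) : ℝ) : ℂ)
      = ∑' k : ℤ, (SchwartzMap.fourierTransformCLM ℝ
            (dilS (2 * n / Z) (by positivity) (FcS F))) k
          * fourier k ((((n : ℝ) + 2 * b) / (2 * n) : ℝ) : UnitAddCircle) := by
  simp only [SchwartzMap.fourierTransformCLM_apply]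
  have hx := SchwartzMap.tsum_eq_tsum_fourier
      (dilS (2 * n / Z) (by positivity : (2 * (n:ℝ) / Z) ≠ 0) (FcS F))
      (((n : ℝ) + 2 * b) / (2 * n))
  rw [← hx]
  apply tsum_congr
  intro m
  rw [dilS_apply, FcS_apply]
  congr 2
  have hn' : (n : ℝ) ≠ 0 := Nat.cast_ne_zero.2 hn0.ne'
  field_simp

section Equiv

/-- Parametrization of odd integers by residues `n + 2b`, `b < n`, modulo `2n`. -/
def oddParam (n : ℕ) (hn : Odd n) (hn0 : 0 < n) : (Fin n × ℤ) ≃ {d : ℤ // Odd d} where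
  toFun p := ⟨(n : ℤ) + 2 * (p.1 : ℤ) + 2 * n * p.2, by
    obtain ⟨j, hj⟩ := hn
    exact ⟨(j : ℤ) + (p.1 : ℤ) + n * p.2, by push_cast [hj]; ring⟩⟩
  invFun d := ⟨⟨(((d.1 - n) / 2) % n).toNat, by
      have h1 : (0:ℤ) < (n:ℤ) := by exact_mod_cast hn0
      have h2 := Int.emod_nonneg ((d.1 - n) / 2) h1.ne'
      have h3 := Int.emod_lt_of_pos ((d.1 - n) / 2) h1
      omega⟩, ((d.1 - n) / 2) / n⟩
  left_inv p := by
    have h1 : (0:ℤ) < (n:ℤ) := by exact_mod_cast hn0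
    have hq : ((n : ℤ) + 2 * (p.1 : ℤ) + 2 * n * p.2 - n) / 2 = (p.1 : ℤ) + n * p.2 := by
      rw [show (n : ℤ) + 2 * (p.1 : ℤ) + 2 * n * p.2 - n = 2 * ((p.1 : ℤ) + n * p.2) by ring]
      exact Int.mul_ediv_cancel_left _ two_ne_zero
    have hb : (p.1 : ℤ) < n := by exact_mod_cast p.1.2
    have hmod : ((p.1 : ℤ) + n * p.2) % n = (p.1 : ℤ) := by
      rw [Int.add_mul_emod_self_left]
      exact Int.emod_eq_of_lt (by positivity) hb
    have hdiv : ((p.1 : ℤ) + n * p.2) / n = p.2 := by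
      rw [Int.add_mul_ediv_left _ _ h1.ne', Int.ediv_eq_zero_of_lt (by positivity) hb, zero_add]
    ext
    · simp only [hq, hmod, hdiv]
      omega
    · simp only [hq, hmod, hdiv]
  right_inv d := by
    have h1 : (0:ℤ) < (n:ℤ) := by exact_mod_cast hn0
    have h2 : (2:ℤ) ∣ d.1 - n := by
      obtain ⟨j, hj⟩ := d.2
      obtain ⟨i, hi⟩ := hn
      refine ⟨j - i, ?_⟩
      rw [hj]
      push_cast [hi]
      ring
    set q : ℤ := (d.1 - n) / 2 with hqdef
    have hq2 : 2 * q = d.1 - n := by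
      rw [hqdef]
      exact Int.mul_ediv_cancel' h2
    have h3 := Int.emod_nonneg q h1.ne'
    apply Subtype.ext
    show (n : ℤ) + 2 * ((q % n).toNat : ℤ) + 2 * n * (q / n) = d.1
    rw [Int.toNat_of_nonneg h3]
    have := Int.emod_add_mul_ediv q (n : ℤ)
    nlinarith [this]
  end Equiv

section Tsum

/-- The untwisted Gauss-type character sum. -/
noncomputable def Tsum (n : ℕ) (k : ℤ) : ℂ :=
  ∑ a ∈ Finset.range n,
    (jacobiSym (a : ℤ) n : ℂ) * Complex.exp (2 * Real.pi * Complex.I * a * k / n)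

lemma Gk_eq (k : ℤ) (n : ℕ) :
    Gk k n = ((1 - Complex.I) / 2 + (jacobiSym (-1) n : ℂ) * (1 + Complex.I) / 2) * Tsum n k :=
  rfl

lemma jacobi_norm_le (a : ℤ) (n : ℕ) : ‖((jacobiSym a n : ℤ) : ℂ)‖ ≤ 1 := by
  rcases jacobiSym.trichotomy a n with h | h | h <;> rw [h] <;> norm_num

lemma Tsum_eq_zmod (n : ℕ) [NeZero n] (k : ℤ) :
    Tsum n k = ∑ b : ZMod n,
      (jacobiSym (b.val : ℤ) n : ℂ)
        * Complex.exp (2 * Real.pi * Complex.I * (b.val : ℂ) * k / n) := by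
  unfold Tsum
  refine Finset.sum_nbij' (fun a => ((a : ℕ) : ZMod n)) ZMod.val
    (fun a _ => Finset.mem_univ _) (fun b _ => Finset.mem_range.2 (ZMod.val_lt b))
    (fun a ha => ZMod.val_cast_of_lt (Finset.mem_range.1 ha))
    (fun b _ => ZMod.natCast_rightInverse b) (fun a ha => ?_)
  rw [ZMod.val_cast_of_lt (Finset.mem_range.1 ha)]

lemma Tsum_norm_le (n : ℕ) (k : ℤ) : ‖Tsum n k‖ ≤ n := by
  unfold Tsum
  refine (norm_sum_le _ _).trans ?_
  have hterm : ∀ a ∈ Finset.range n,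
      ‖(jacobiSym (a : ℤ) n : ℂ) * Complex.exp (2 * Real.pi * Complex.I * a * k / n)‖
        ≤ 1 := by
    intro a _
    rw [norm_mul]
    have h1 : (2 * (Real.pi:ℂ) * Complex.I * a * k / n)
        = ((2 * Real.pi * a * k / n : ℝ) : ℂ) * Complex.I := by
      push_cast
      ring
    have h2 : ‖Complex.exp (2 * Real.pi * Complex.I * a * k / n)‖ = 1 := by
      rw [h1, Complex.norm_exp_ofReal_mul_I]
    rw [h2, mul_one]
    exact jacobi_norm_le _ _
  refine (Finset.sum_le_sum hterm).trans ?_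
  simp

lemma Tsum_neg (n : ℕ) (hn0 : 0 < n) (k : ℤ) :
    Tsum n (-k) = ((jacobiSym (-1) n : ℤ) : ℂ) * Tsum n k := by
  haveI : NeZero n := ⟨hn0.ne'⟩
  have hnC : (n : ℂ) ≠ 0 := Nat.cast_ne_zero.2 hn0.ne'
  rw [Tsum_eq_zmod, Tsum_eq_zmod, Finset.mul_sum]
  simp only [Int.cast_neg]
  rw [← Equiv.sum_comp (Equiv.neg (ZMod n)) (fun b : ZMod n =>
    (jacobiSym (b.val : ℤ) n : ℂ)
      * Complex.exp (2 * Real.pi * Complex.I * (b.val : ℂ) * (-k) / n))]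
  refine Finset.sum_congr rfl (fun b _ => ?_)
  simp only [Equiv.neg_apply]
  set v : ℕ := (-b).val with hvdef
  set w : ℕ := b.val with hwdef
  have hv : ((v : ℕ) : ZMod n) = -b := ZMod.natCast_rightInverse _
  have hw : ((w : ℕ) : ZMod n) = b := ZMod.natCast_rightInverse _
  have hcong : ((v : ℤ)) % (n : ℤ) = (-(w : ℤ)) % (n : ℤ) := by
    have hc : (((v : ℤ)) : ZMod n) = ((-(w : ℤ) : ℤ) : ZMod n) := by
      push_cast [hv, hw]
      rfl
    exact (ZMod.intCast_eq_intCast_iff _ _ _).mp hc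
  have hJ : jacobiSym (v : ℤ) n = jacobiSym (-1) n * jacobiSym (w : ℤ) n := by
    rw [jacobiSym.mod_left' hcong, show -(w:ℤ) = -1 * w by ring, jacobiSym.mul_left]
  obtain ⟨j, hj⟩ := Int.ModEq.dvd (hcong : Int.ModEq n (v : ℤ) (-(w:ℤ)))
  have hvInt : (v : ℤ) = -(w : ℤ) - n * j := by linarith [hj]
  have hvC : ((v : ℕ) : ℂ) = -((w : ℕ) : ℂ) - (n : ℂ) * (j : ℂ) := by
    exact_mod_cast congrArg (fun t : ℤ => (t : ℂ)) hvInt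
  have harg : 2 * (Real.pi : ℂ) * Complex.I * (v : ℂ) * (-k) / n
      = 2 * Real.pi * Complex.I * (w : ℂ) * k / n + ((j * k : ℤ) : ℂ) * (2 * Real.pi * Complex.I) := by
    rw [hvC]
    field_simp
    push_cast
    ring
  rw [harg, Complex.exp_add, Complex.exp_int_mul_two_pi_mul_I, mul_one, hJ]
  push_cast
  ring

end Tsum

section Reflect

lemma neg_one_zpow_neg (k : ℤ) : (-1 : ℂ) ^ (-k) = (-1 : ℂ) ^ k := by
  rcases Int.even_or_odd k with h | h
  · rw [h.neg.neg_one_zpow, h.neg_one_zpow]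
  · rw [h.neg.neg_one_zpow, h.neg_one_zpow]

lemma norm_neg_one_zpow (k : ℤ) : ‖(-1 : ℂ) ^ k‖ = 1 := by
  rcases Int.even_or_odd k with h | h
  · rw [h.neg_one_zpow]; norm_num
  · rw [h.neg_one_zpow]; norm_num

lemma tsum_reflect {f g : ℤ → ℂ} (hf : Summable f) (hg : Summable g)
    (h : ∀ k, f k + f (-k) = g k + g (-k)) : ∑' k, f k = ∑' k, g k := by
  have hfn : Summable (fun k : ℤ => f (-k)) := (Equiv.neg ℤ).summable_iff.2 hf
  have hgn : Summable (fun k : ℤ => g (-k)) := (Equiv.neg ℤ).summable_iff.2 hg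
  have e1 : ∑' k : ℤ, f (-k) = ∑' k, f k := by
    simpa using (Equiv.neg ℤ).tsum_eq f
  have e2 : ∑' k : ℤ, g (-k) = ∑' k, g k := by
    simpa using (Equiv.neg ℤ).tsum_eq g
  have key : (∑' k, f k) + (∑' k, f k) = (∑' k, g k) + (∑' k, g k) := by
    calc (∑' k, f k) + (∑' k, f k) = (∑' k, f k) + (∑' k : ℤ, f (-k)) := by rw [e1]
    _ = ∑' k : ℤ, (f k + f (-k)) := (Summable.tsum_add hf hfn).symm
    _ = ∑' k : ℤ, (g k + g (-k)) := tsum_congr h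
    _ = (∑' k, g k) + (∑' k : ℤ, g (-k)) := Summable.tsum_add hg hgn
    _ = (∑' k, g k) + (∑' k, g k) := by rw [e2]
  have h2 : (2 : ℂ) * (∑' k, f k) = 2 * (∑' k, g k) := by
    rw [two_mul, two_mul]
    exact key
  exact mul_left_cancel₀ two_ne_zero h2

end Reflect

lemma oddParam_val (n : ℕ) (hn : Odd n) (hn0 : 0 < n) (b : Fin n) (m : ℤ) :
    ((oddParam n hn hn0 (b, m)) : {d : ℤ // Odd d}).1
      = (n : ℤ) + 2 * ((b : ℕ) : ℤ) + 2 * n * m := rfl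

lemma norm_fourier_coe (k : ℤ) (x : ℝ) : ‖(fourier k (x : UnitAddCircle) : ℂ)‖ = 1 := by
  rw [fourier_coe_apply]
  have h1 : (2 * (Real.pi : ℂ) * Complex.I * (k : ℂ) * (x : ℂ) / (((1:ℝ)) : ℂ))
      = ((2 * Real.pi * k * x : ℝ) : ℂ) * Complex.I := by
    push_cast
    rw [div_one]
    ring
  rw [h1, Complex.norm_exp_ofReal_mul_I]


set_option maxHeartbeats 2000000 in
/-- **Poisson summation formula (Lemma 2.2, second form).**
For a Schwartz function `F`, an odd positive integer `n` and `Z > 0`: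
`Σ_{d odd} (d/n) F(d/Z) = (Z/2n) (2/n) Σ_{k ∈ ℤ} (−1)^k G_k(n) F̌(kZ/2n)`. -/
theorem poisson_sum_odd (F : SchwartzMap ℝ ℝ) (n : ℕ) (hn : Odd n) (hn0 : 0 < n)
    (Z : ℝ) (hZ : 0 < Z) :
    ∑' d : {d : ℤ // Odd d}, (jacobiSym d.1 n : ℂ) * (F ((d.1 : ℝ) / Z) : ℂ) =
      ((Z : ℂ) / (2 * (n : ℂ))) * (jacobiSym 2 n : ℂ) *
        ∑' k : ℤ, (-1 : ℂ) ^ k * Gk k n *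
          (fourierCheck F ((k : ℝ) * Z / (2 * (n : ℝ))) : ℂ) := by
  have hnR : (n : ℝ) ≠ 0 := Nat.cast_ne_zero.2 hn0.ne'
  have hnC : (n : ℂ) ≠ 0 := Nat.cast_ne_zero.2 hn0.ne'
  have hcpos : (0 : ℝ) < 2 * n / Z := by positivity
  -- notation
  set G : SchwartzMap ℝ ℂ := dilS (2 * n / Z) hcpos.ne' (FcS F) with hGdef
  set FG : SchwartzMap ℝ ℂ := SchwartzMap.fourierTransformCLM ℝ G with hFGdef
  have hFGnorm : Summable (fun k : ℤ => ‖FG k‖) := schwartz_summable_norm _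
  set J2c : ℂ := ((jacobiSym 2 n : ℤ) : ℂ) with hJ2c
  set u : ℤ → ℂ := fun k => (-1 : ℂ) ^ k * Tsum n k with hu
  set g : ℤ → ℂ := fun k => (-1 : ℂ) ^ k * Gk k n *
    ((fourierCheck F ((k : ℝ) * Z / (2 * (n : ℝ))) : ℝ) : ℂ) with hg
  set cC : ℂ := ((2 * n / Z : ℝ) : ℂ) with hcC
  have hcC0 : cC ≠ 0 := by
    rw [hcC]
    exact_mod_cast hcpos.ne'
  have hunorm : ∀ k : ℤ, ‖u k‖ ≤ n := by
    intro k
    rw [hu, norm_mul, norm_neg_one_zpow, one_mul]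
    exact Tsum_norm_le n k
  -- the key pointwise Fourier identity
  have hyk : ∀ k : ℤ, (k : ℝ) / (2 * n / Z) = (k : ℝ) * Z / (2 * n) := by
    intro k
    field_simp
  have hFGk : ∀ k : ℤ, cC * FG k
      = ((Ci F ((k : ℝ) * Z / (2 * n)) : ℝ) : ℂ)
        - ((Si F ((k : ℝ) * Z / (2 * n)) : ℝ) : ℂ) * Complex.I := by
    intro k
    have h1 : FG (k : ℝ) = 𝓕 (⇑G) (k : ℝ) := by
      rw [hFGdef, SchwartzMap.fourierTransformCLM_apply]
      rfl
    rw [h1, hGdef, fourier_dilS (FcS F) (2 * n / Z) hcpos (k : ℝ), hyk k,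
      fourierIntegral_FcS]
    rw [hcC, ← mul_assoc, ← Complex.ofReal_mul, mul_inv_cancel₀ hcpos.ne',
      Complex.ofReal_one, one_mul]
  -- summability of the two reflected series
  have hf : Summable (fun k : ℤ => cC * (u k * FG k)) := by
    apply Summable.of_norm_bounded (g := fun k : ℤ => (‖cC‖ * n) * ‖FG k‖)
      (hFGnorm.mul_left (‖cC‖ * n))
    intro k
    rw [norm_mul, norm_mul]
    calc ‖cC‖ * (‖u k‖ * ‖FG k‖) ≤ ‖cC‖ * ((n : ℝ) * ‖FG k‖) := by
          gcongr
          exact hunorm k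
    _ = (‖cC‖ * n) * ‖FG k‖ := by ring
  have hcheck_bound : ∀ k : ℤ,
      ‖((fourierCheck F ((k : ℝ) * Z / (2 * (n : ℝ))) : ℝ) : ℂ)‖ ≤ 2 * (‖cC‖ * ‖FG k‖) := by
    intro k
    set z : ℂ := cC * FG k with hz
    have hre : z.re = Ci F ((k : ℝ) * Z / (2 * n)) := by rw [hz, hFGk k]; simp
    have him : z.im = -Si F ((k : ℝ) * Z / (2 * n)) := by rw [hz, hFGk k]; simp
    rw [Complex.norm_real, Real.norm_eq_abs, fourierCheck_eq]
    have h1 : |Ci F ((k : ℝ) * Z / (2 * n))| ≤ ‖z‖ := by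
      rw [← hre]; exact Complex.abs_re_le_norm z
    have h2 : |Si F ((k : ℝ) * Z / (2 * n))| ≤ ‖z‖ := by
      rw [← abs_neg, ← him]; exact Complex.abs_im_le_norm z
    have h3 : ‖z‖ ≤ ‖cC‖ * ‖FG k‖ := by
      rw [hz, norm_mul]
    calc |Ci F ((k : ℝ) * Z / (2 * n)) + Si F ((k : ℝ) * Z / (2 * n))|
        ≤ |Ci F ((k : ℝ) * Z / (2 * n))| + |Si F ((k : ℝ) * Z / (2 * n))| := abs_add_le _ _
    _ ≤ ‖z‖ + ‖z‖ := add_le_add h1 h2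
    _ ≤ (‖cC‖ * ‖FG k‖) + (‖cC‖ * ‖FG k‖) := add_le_add h3 h3
    _ = 2 * (‖cC‖ * ‖FG k‖) := by ring
  have hGknorm : ∀ k : ℤ, ‖Gk k n‖
      ≤ ‖(1 - Complex.I) / 2 + ((jacobiSym (-1) n : ℤ) : ℂ) * (1 + Complex.I) / 2‖ * n := by
    intro k
    rw [Gk_eq, norm_mul]
    exact mul_le_mul_of_nonneg_left (Tsum_norm_le n k) (norm_nonneg _)
  have hgsum : Summable g := by
    set B : ℝ := ‖(1 - Complex.I) / 2 + ((jacobiSym (-1) n : ℤ) : ℂ) * (1 + Complex.I) / 2‖ * n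
      with hB
    apply Summable.of_norm_bounded (g := fun k : ℤ => (B * (2 * ‖cC‖)) * ‖FG k‖)
      (hFGnorm.mul_left _)
    intro k
    rw [hg]
    rw [norm_mul, norm_mul, norm_neg_one_zpow, one_mul]
    calc ‖Gk k n‖ * ‖((fourierCheck F ((k : ℝ) * Z / (2 * (n : ℝ))) : ℝ) : ℂ)‖
        ≤ B * (2 * (‖cC‖ * ‖FG k‖)) := by
          apply mul_le_mul (hGknorm k) (hcheck_bound k) (norm_nonneg _)
          rw [hB]
          positivity
    _ = (B * (2 * ‖cC‖)) * ‖FG k‖ := by ring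
  -- pointwise reflection identity
  have hpoint : ∀ k : ℤ, cC * (u k * FG (k : ℝ)) + cC * (u (-k) * FG ((-k : ℤ) : ℝ))
      = g k + g (-k) := by
    intro k
    have hyneg : ((-k : ℤ) : ℝ) * Z / (2 * n) = -((k : ℝ) * Z / (2 * n)) := by
      push_cast
      ring
    have e1 : cC * (u k * FG (k : ℝ))
        = u k * ((Ci F ((k:ℝ)*Z/(2*n)) : ℂ) - (Si F ((k:ℝ)*Z/(2*n)) : ℂ) * Complex.I) := by
      rw [show cC * (u k * FG (k : ℝ)) = u k * (cC * FG (k : ℝ)) by ring, hFGk k]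
    have e2 : cC * (u (-k) * FG ((-k : ℤ) : ℝ))
        = u (-k) * ((Ci F ((k:ℝ)*Z/(2*n)) : ℂ) + (Si F ((k:ℝ)*Z/(2*n)) : ℂ) * Complex.I) := by
      rw [show cC * (u (-k) * FG ((-k : ℤ) : ℝ)) = u (-k) * (cC * FG ((-k : ℤ) : ℝ)) by ring,
        hFGk (-k), hyneg, Ci_neg, Si_neg]
      push_cast
      ring
    have hun : u (-k) = ((jacobiSym (-1) n : ℤ) : ℂ) * u k := by
      rw [hu]
      simp only
      rw [neg_one_zpow_neg, Tsum_neg n hn0]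
      ring
    have e3 : g k = u k * (((1 - Complex.I) / 2 + (jacobiSym (-1) n : ℂ) * (1 + Complex.I) / 2)
        * ((Ci F ((k:ℝ)*Z/(2*n)) : ℂ) + (Si F ((k:ℝ)*Z/(2*n)) : ℂ))) := by
      rw [hg]
      simp only
      rw [Gk_eq, fourierCheck_eq, hu]
      push_cast
      ring
    have e4 : g (-k) = u (-k) * (((1 - Complex.I) / 2
        + (jacobiSym (-1) n : ℂ) * (1 + Complex.I) / 2)
        * ((Ci F ((k:ℝ)*Z/(2*n)) : ℂ) - (Si F ((k:ℝ)*Z/(2*n)) : ℂ))) := by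
      rw [hg]
      simp only
      rw [Gk_eq, fourierCheck_eq, hyneg, Ci_neg, Si_neg, hu]
      push_cast
      ring
    rw [e1, e2, e3, e4, hun]
    rcases jacobiSym.eq_one_or_neg_one (show Int.gcd (-1) (n : ℤ) = 1 by simp) with hη | hη <;>
      rw [hη] <;> push_cast <;> ring
  have hrefl : (∑' k : ℤ, cC * (u k * FG (k : ℝ))) = ∑' k : ℤ, g k :=
    tsum_reflect hf hgsum hpoint
  have hfinal : (∑' k : ℤ, u k * FG (k : ℝ)) = ((Z : ℂ) / (2 * (n : ℂ))) * ∑' k : ℤ, g k := by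
    have h1 : (∑' k : ℤ, u k * FG (k : ℝ))
        = cC⁻¹ * ∑' k : ℤ, cC * (u k * FG (k : ℝ)) := by
      rw [tsum_mul_left, ← mul_assoc, inv_mul_cancel₀ hcC0, one_mul]
    have h2 : cC⁻¹ = (Z : ℂ) / (2 * (n : ℂ)) := by
      rw [hcC]
      push_cast
      rw [inv_div]
    rw [h1, hrefl, h2]
  -- structural reorganization of the left-hand side
  have hψ : Summable (fun d : ℤ => ((jacobiSym d n : ℤ) : ℂ) * ((F ((d : ℝ) / Z) : ℝ) : ℂ)) := by
    apply Summable.of_norm_bounded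
      (g := fun d : ℤ => ‖dilS Z⁻¹ (inv_ne_zero hZ.ne') (FcS F) d‖) (schwartz_summable_norm _)
    intro d
    have hd : dilS Z⁻¹ (inv_ne_zero hZ.ne') (FcS F) d = ((F ((d : ℝ) / Z) : ℝ) : ℂ) := by
      rw [dilS_apply, FcS_apply, div_eq_mul_inv]
    rw [hd, norm_mul]
    exact mul_le_of_le_one_left (norm_nonneg _) (jacobi_norm_le _ _)
  have hsub : Summable (fun d : {d : ℤ // Odd d} =>
      ((jacobiSym d.1 n : ℤ) : ℂ) * ((F ((d.1 : ℝ) / Z) : ℝ) : ℂ)) := hψ.subtype _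
  have hsum : Summable (fun p : Fin n × ℤ =>
      ((jacobiSym ((oddParam n hn hn0 p).1) n : ℤ) : ℂ)
        * ((F (((oddParam n hn hn0 p).1 : ℝ) / Z) : ℝ) : ℂ)) :=
    (oddParam n hn hn0).summable_iff.2 hsub
  have step1 : (∑' d : {d : ℤ // Odd d},
        ((jacobiSym d.1 n : ℤ) : ℂ) * ((F ((d.1 : ℝ) / Z) : ℝ) : ℂ))
      = ∑ b : Fin n, ∑' m : ℤ,
        ((jacobiSym ((oddParam n hn hn0 (b, m)).1) n : ℤ) : ℂ)
          * ((F (((oddParam n hn hn0 (b, m)).1 : ℝ) / Z) : ℝ) : ℂ) := by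
    rw [← Equiv.tsum_eq (oddParam n hn hn0), Summable.tsum_prod hsum, tsum_fintype]
  have step2 : ∀ b : Fin n,
      (∑' m : ℤ, ((jacobiSym ((oddParam n hn hn0 (b, m)).1) n : ℤ) : ℂ)
          * ((F (((oddParam n hn hn0 (b, m)).1 : ℝ) / Z) : ℝ) : ℂ))
        = (J2c * ((jacobiSym ((b : ℕ) : ℤ) n : ℤ) : ℂ))
            * ∑' k : ℤ, FG k * fourier k
                ((((n : ℝ) + 2 * (b : ℕ)) / (2 * n) : ℝ) : UnitAddCircle) := by
    intro b
    have hterm : ∀ m : ℤ,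
        ((jacobiSym ((oddParam n hn hn0 (b, m)).1) n : ℤ) : ℂ)
            * ((F (((oddParam n hn hn0 (b, m)).1 : ℝ) / Z) : ℝ) : ℂ)
          = (J2c * ((jacobiSym ((b : ℕ) : ℤ) n : ℤ) : ℂ))
              * ((F (((n : ℝ) + 2 * (b : ℕ) + 2 * n * m) / Z) : ℝ) : ℂ) := by
      intro m
      have hJ : jacobiSym ((n : ℤ) + 2 * ((b : ℕ) : ℤ) + 2 * (n : ℤ) * m) n
          = jacobiSym 2 n * jacobiSym ((b : ℕ) : ℤ) n := by
        rw [show (n : ℤ) + 2 * ((b : ℕ) : ℤ) + 2 * (n : ℤ) * m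
            = 2 * ((b : ℕ) : ℤ) + (n : ℤ) * (1 + 2 * m) by ring]
        rw [jacobiSym.mod_left' (Int.add_mul_emod_self_left _ _ _), jacobiSym.mul_left]
      rw [oddParam_val n hn hn0 b m, hJ, hJ2c]
      push_cast
      ring
    calc (∑' m : ℤ, ((jacobiSym ((oddParam n hn hn0 (b, m)).1) n : ℤ) : ℂ)
          * ((F (((oddParam n hn hn0 (b, m)).1 : ℝ) / Z) : ℝ) : ℂ))
        = ∑' m : ℤ, (J2c * ((jacobiSym ((b : ℕ) : ℤ) n : ℤ) : ℂ))
            * ((F (((n : ℝ) + 2 * (b : ℕ) + 2 * n * m) / Z) : ℝ) : ℂ) := tsum_congr hterm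
      _ = (J2c * ((jacobiSym ((b : ℕ) : ℤ) n : ℤ) : ℂ))
            * ∑' m : ℤ, ((F (((n : ℝ) + 2 * (b : ℕ) + 2 * n * m) / Z) : ℝ) : ℂ) :=
        tsum_mul_left
      _ = (J2c * ((jacobiSym ((b : ℕ) : ℤ) n : ℤ) : ℂ))
            * ∑' k : ℤ, FG k * fourier k
                ((((n : ℝ) + 2 * (b : ℕ)) / (2 * n) : ℝ) : UnitAddCircle) := by
        rw [poisson_b F hn0 hZ (b : ℕ)]
  have hout : ∀ b : Fin n, Summable (fun k : ℤ =>
      (J2c * ((jacobiSym ((b : ℕ) : ℤ) n : ℤ) : ℂ))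
        * (FG k * fourier k ((((n : ℝ) + 2 * (b : ℕ)) / (2 * n) : ℝ) : UnitAddCircle))) := by
    intro b
    apply Summable.of_norm_bounded
      (g := fun k : ℤ => ‖J2c * ((jacobiSym ((b : ℕ) : ℤ) n : ℤ) : ℂ)‖ * ‖FG k‖)
      (hFGnorm.mul_left _)
    intro k
    rw [norm_mul, norm_mul, norm_mul, norm_fourier_coe, mul_one]
  have hk : ∀ k : ℤ, (∑ b : Fin n,
        (J2c * ((jacobiSym ((b : ℕ) : ℤ) n : ℤ) : ℂ))
          * (FG k * fourier k ((((n : ℝ) + 2 * (b : ℕ)) / (2 * n) : ℝ) : UnitAddCircle)))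
      = J2c * (u k * FG (k : ℝ)) := by
    intro k
    have hfourb : ∀ b : Fin n,
        (fourier k ((((n : ℝ) + 2 * (b : ℕ)) / (2 * n) : ℝ) : UnitAddCircle) : ℂ)
          = (-1 : ℂ) ^ k
            * Complex.exp (2 * Real.pi * Complex.I * ((b : ℕ) : ℂ) * (k : ℂ) / (n : ℂ)) := by
      intro b
      rw [fourier_coe_apply]
      have h1 : 2 * (Real.pi : ℂ) * Complex.I * (k : ℂ)
            * (((((n : ℝ) + 2 * (b : ℕ)) / (2 * n)) : ℝ) : ℂ) / (((1 : ℝ)) : ℂ)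
          = (k : ℂ) * ((Real.pi : ℂ) * Complex.I)
            + 2 * Real.pi * Complex.I * ((b : ℕ) : ℂ) * (k : ℂ) / (n : ℂ) := by
        push_cast
        field_simp
      rw [h1, Complex.exp_add, Complex.exp_int_mul, Complex.exp_pi_mul_I]
    have hTfin : (∑ b : Fin n, ((jacobiSym ((b : ℕ) : ℤ) n : ℤ) : ℂ)
          * Complex.exp (2 * Real.pi * Complex.I * ((b : ℕ) : ℂ) * (k : ℂ) / (n : ℂ)))
        = Tsum n k :=
      Fin.sum_univ_eq_sum_range (fun a : ℕ => ((jacobiSym (a : ℤ) n : ℤ) : ℂ)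
        * Complex.exp (2 * Real.pi * Complex.I * (a : ℂ) * (k : ℂ) / (n : ℂ))) n
    calc (∑ b : Fin n, (J2c * ((jacobiSym ((b : ℕ) : ℤ) n : ℤ) : ℂ))
          * (FG k * fourier k ((((n : ℝ) + 2 * (b : ℕ)) / (2 * n) : ℝ) : UnitAddCircle)))
        = ∑ b : Fin n, (J2c * ((-1 : ℂ) ^ k * FG (k : ℝ)))
            * (((jacobiSym ((b : ℕ) : ℤ) n : ℤ) : ℂ)
              * Complex.exp (2 * Real.pi * Complex.I * ((b : ℕ) : ℂ) * (k : ℂ) / (n : ℂ))) :=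
          Finset.sum_congr rfl (fun b _ => by rw [hfourb b]; ring)
      _ = (J2c * ((-1 : ℂ) ^ k * FG (k : ℝ)))
            * ∑ b : Fin n, ((jacobiSym ((b : ℕ) : ℤ) n : ℤ) : ℂ)
              * Complex.exp (2 * Real.pi * Complex.I * ((b : ℕ) : ℂ) * (k : ℂ) / (n : ℂ)) := by
          rw [← Finset.mul_sum]
      _ = J2c * (u k * FG (k : ℝ)) := by rw [hTfin, hu]; ring
  calc (∑' d : {d : ℤ // Odd d},
        ((jacobiSym d.1 n : ℤ) : ℂ) * ((F ((d.1 : ℝ) / Z) : ℝ) : ℂ))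
      = ∑ b : Fin n, ∑' m : ℤ,
        ((jacobiSym ((oddParam n hn hn0 (b, m)).1) n : ℤ) : ℂ)
          * ((F (((oddParam n hn hn0 (b, m)).1 : ℝ) / Z) : ℝ) : ℂ) := step1
    _ = ∑ b : Fin n, (J2c * ((jacobiSym ((b : ℕ) : ℤ) n : ℤ) : ℂ))
          * ∑' k : ℤ, FG k * fourier k
              ((((n : ℝ) + 2 * (b : ℕ)) / (2 * n) : ℝ) : UnitAddCircle) :=
        Finset.sum_congr rfl (fun b _ => step2 b)
    _ = ∑ b : Fin n, ∑' k : ℤ, (J2c * ((jacobiSym ((b : ℕ) : ℤ) n : ℤ) : ℂ))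
          * (FG k * fourier k ((((n : ℝ) + 2 * (b : ℕ)) / (2 * n) : ℝ) : UnitAddCircle)) :=
        Finset.sum_congr rfl (fun b _ => tsum_mul_left.symm)
    _ = ∑' k : ℤ, ∑ b : Fin n, (J2c * ((jacobiSym ((b : ℕ) : ℤ) n : ℤ) : ℂ))
          * (FG k * fourier k ((((n : ℝ) + 2 * (b : ℕ)) / (2 * n) : ℝ) : UnitAddCircle)) :=
        (Summable.tsum_finsetSum (fun b _ => hout b)).symm
    _ = ∑' k : ℤ, J2c * (u k * FG (k : ℝ)) := tsum_congr hk
    _ = J2c * ∑' k : ℤ, u k * FG (k : ℝ) := tsum_mul_left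
    _ = J2c * (((Z : ℂ) / (2 * (n : ℂ))) * ∑' k : ℤ, g k) := by rw [hfinal]
    _ = ((Z : ℂ) / (2 * (n : ℂ))) * J2c * ∑' k : ℤ, g k := by ring
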